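/- arXiv:2307.03284 — 2 statements merged into one kernel-verified Lean document; each statement's English description precedes it below -/
import Mathlib

section
/- Let K = ℚ(α) where α is a root of the monic irreducible trinomial F(x) = x^9 + a·x + b ∈ ℤ[x]. If 2 does not divide b, then 2 does not divide the index (ℤ_K : ℤ[α]). -/
/-!
As `b` is odd, the relation `α · F'(α) = -8aα - 9b` makes `F'(α)` coprime to `2` in `𝓞 K`, so
`N(F'(α)) = ±#(𝓞 K / (F'(α)))` is odd. Up to sign this norm is the discriminant of the power basis
`1, α, …, α⁸`, which multiplies `𝓞 K` into `ℤ[α]`; hence the index divides a power of it.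
-/

open Polynomial NumberField

/-- The index `(ℤ_K : ℤ[θ])` of the subring `ℤ[θ]` in the ring of integers of `K`. -/
noncomputable def subringIndex {K : Type*} [Field K] [NumberField K] (θ : 𝓞 K) : ℕ :=
  (Algebra.adjoin ℤ ({θ} : Set (𝓞 K))).toSubring.toAddSubgroup.index

theorem not_dvd_natCard_of_isUnit {R : Type*} [Ring R] [Finite R] {p : ℕ} (hp : p.Prime)
    (hu : IsUnit (p : R)) : ¬ p ∣ Nat.card R := by
  have : Fact p.Prime := ⟨hp⟩
  intro hdvd
  obtain ⟨x, hx⟩ := exists_prime_addOrderOf_dvd_card' p hdvd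
  have hpx : (p : R) * x = 0 := by rw [← nsmul_eq_mul, ← hx, addOrderOf_nsmul_eq_zero]
  rw [hu.mul_right_eq_zero.mp hpx, addOrderOf_zero] at hx
  exact hp.one_lt.ne hx

theorem Polynomial.Monic.eq_minpoly_of_irreducible {R S : Type*} [CommRing R] [IsDomain R]
    [IsIntegrallyClosed R] [CommRing S] [IsDomain S] [Algebra R S] [Module.IsTorsionFree R S]
    {s : S} {P : R[X]} (hmo : P.Monic) (hirr : Irreducible P) (hP : aeval s P = 0) :
    P = minpoly R s := by
  have hs : IsIntegral R s := ⟨P, hmo, hP⟩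
  have hdvd := minpoly.isIntegrallyClosed_dvd hs hP
  exact eq_of_monic_of_associated hmo (minpoly.monic hs)
    ((minpoly.prime_of_isIntegrallyClosed hs).irreducible.associated_of_dvd hirr hdvd).symm

namespace NumberField.RingOfIntegers

variable {K : Type*} [Field K]

theorem coe_mem_adjoin_singleton_iff {α z : 𝓞 K} :
    (z : K) ∈ Algebra.adjoin ℤ {(α : K)} ↔ z ∈ Algebra.adjoin ℤ {α} := by
  have himg : Algebra.adjoin ℤ {(α : K)} =
      (Algebra.adjoin ℤ {α}).map (IsScalarTower.toAlgHom ℤ (𝓞 K) K) := by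
    rw [AlgHom.map_adjoin, Set.image_singleton]; rfl
  rw [himg, Subalgebra.mem_map]
  exact ⟨fun ⟨w, hw, hwz⟩ ↦ RingOfIntegers.coe_injective hwz ▸ hw, fun hz ↦ ⟨z, hz, rfl⟩⟩

variable [NumberField K]

theorem coe_aeval_derivative_minpoly (α : 𝓞 K) :
    ((aeval α (derivative (minpoly ℤ α)) : 𝓞 K) : K) =
      aeval (α : K) (derivative (minpoly ℚ (α : K))) := by
  rw [minpoly.isIntegrallyClosed_eq_field_fractions ℚ K α.isIntegral, derivative_map,
    aeval_map_algebraMap, aeval_algebraMap_apply]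

theorem aeval_derivative_minpoly_ne_zero (α : 𝓞 K) :
    aeval α (derivative (minpoly ℤ α)) ≠ 0 := by
  have hK := (Algebra.IsSeparable.isSeparable ℚ (α : K)).aeval_derivative_ne_zero
    (minpoly.aeval ℚ (α : K))
  rw [← coe_aeval_derivative_minpoly] at hK
  exact fun h ↦ hK (by simp [h])

theorem norm_aeval_derivative_minpoly_mul_mem_adjoin {α : 𝓞 K}
    (hgen : Algebra.adjoin ℚ {(α : K)} = ⊤) (x : 𝓞 K) :
    (Algebra.norm ℤ (aeval α (derivative (minpoly ℤ α))) : 𝓞 K) * x ∈ Algebra.adjoin ℤ {α} := by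
  let pb : PowerBasis ℚ K := (Algebra.adjoin.powerBasis (IsIntegral.of_finite ℚ (α : K))).map
    ((Subalgebra.equivOfEq _ ⊤ hgen).trans Subalgebra.topEquiv)
  set N := Algebra.norm ℤ (aeval α (derivative (minpoly ℤ α)))
  set ε : ℤ := (-1) ^ (Module.finrank ℚ K * (Module.finrank ℚ K - 1) / 2)
  have hdiscr : Algebra.discr ℚ pb.basis = ((ε * N : ℤ) : ℚ) := by
    rw [Algebra.discr_powerBasis_eq_norm, Int.cast_mul, Algebra.coe_norm_int,
      coe_aeval_derivative_minpoly]
    push_cast [ε]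
    rfl
  have hmem := Algebra.discr_mul_isIntegral_mem_adjoin ℚ (R := ℤ) (B := pb)
    α.isIntegral_coe x.isIntegral_coe
  have hcoe : ((ε * N : ℤ) : ℚ) • (x : K) = ((((ε * N : ℤ) : 𝓞 K) * x : 𝓞 K) : K) := by
    simp [Algebra.smul_def]
  rw [hdiscr, hcoe] at hmem
  have hε : (ε : 𝓞 K) * ε = 1 := by
    rw [← Int.cast_mul, ← mul_pow]; norm_num
  have hNx : (N : 𝓞 K) * x = ε * (((ε * N : ℤ) : 𝓞 K) * x) := by
    push_cast; linear_combination (-(N : 𝓞 K) * x) * hε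
  rw [hNx]
  exact mul_mem (intCast_mem _ ε) (coe_mem_adjoin_singleton_iff.mp hmem)

theorem subringIndex_dvd_natAbs_pow {θ : 𝓞 K} {n : ℤ}
    (h : ∀ x : 𝓞 K, (n : 𝓞 K) * x ∈ Algebra.adjoin ℤ {θ}) :
    subringIndex θ ∣ n.natAbs ^ Module.finrank ℤ (𝓞 K) := by
  have hle : (Ideal.span {(n : 𝓞 K)}).toAddSubgroup ≤
      (Algebra.adjoin ℤ ({θ} : Set (𝓞 K))).toSubring.toAddSubgroup := by
    intro z hz
    obtain ⟨c, rfl⟩ := Ideal.mem_span_singleton'.mp hz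
    rw [mul_comm]
    exact h c
  have hnorm : Ideal.absNorm (Ideal.span {(n : 𝓞 K)}) = n.natAbs ^ Module.finrank ℤ (𝓞 K) := by
    rw [Ideal.absNorm_span_singleton, ← eq_intCast (algebraMap ℤ (𝓞 K)), Algebra.norm_algebraMap,
      Int.natAbs_pow]
  exact hnorm ▸ AddSubgroup.index_dvd_of_le hle

theorem not_dvd_norm_of_isCoprime {y : 𝓞 K} (hy : y ≠ 0) {p : ℕ} (hp : p.Prime)
    (hcop : IsCoprime y (p : 𝓞 K)) : ¬ (p : ℤ) ∣ Algebra.norm ℤ y := by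
  have hcard : Nat.card (𝓞 K ⧸ Ideal.span {y}) = (Algebra.norm ℤ y).natAbs := by
    rw [← Submodule.cardQuot_apply, ← Ideal.absNorm_apply, Ideal.absNorm_span_singleton]
  have : Finite (𝓞 K ⧸ Ideal.span {y}) := Nat.finite_of_card_ne_zero <| by
    rw [hcard, Int.natAbs_ne_zero, Algebra.norm_ne_zero_iff]; exact hy
  obtain ⟨u, v, huv⟩ := hcop
  have hunit : IsUnit (p : 𝓞 K ⧸ Ideal.span {y}) := by
    refine IsUnit.of_mul_eq_one_right (Ideal.Quotient.mk _ v) ?_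
    have := congrArg (Ideal.Quotient.mk (Ideal.span {y})) huv
    rwa [map_add, map_mul, Ideal.Quotient.eq_zero_iff_mem.mpr (Ideal.mem_span_singleton_self y),
      mul_zero, zero_add, map_mul, map_natCast, map_one] at this
  rw [Int.natCast_dvd, ← hcard]
  exact not_dvd_natCard_of_isUnit hp hunit

end NumberField.RingOfIntegers

theorem isCoprime_nine_mul_pow_eight_add_two {R : Type*} [CommRing R] {a b : ℤ} {α : R}
    (hroot : α ^ 9 + a * α + b = 0) (hb : ¬ 2 ∣ b) : IsCoprime (9 * α ^ 8 + a) 2 := by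
  obtain ⟨m, rfl⟩ := Int.not_even_iff_odd.mp (fun h ↦ hb h.two_dvd)
  exact ⟨-α, -(4 * a * α + 9 * m + 4), by push_cast at hroot; linear_combination (-9) * hroot⟩

/-- If `2` does not divide `b`, then `2` does not divide the index `(ℤ_K : ℤ[α])`. -/
theorem not_two_dvd_subringIndex_of_not_dvd
    (a b : ℤ) (hF : Irreducible (X ^ 9 + C a * X + C b))
    (K : Type*) [Field K] [NumberField K] (α : 𝓞 K)
    (hroot : aeval α (X ^ 9 + C a * X + C b) = 0)
    (hgen : Algebra.adjoin ℚ ({(α : K)} : Set K) = ⊤)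
    (hb : ¬ (2 : ℤ) ∣ b) :
    ¬ 2 ∣ subringIndex α := by
  have hmonic : (X ^ 9 + C a * X + C b).Monic := by
    rw [add_assoc]
    exact monic_X_pow_add (degree_linear_le.trans_lt (by norm_num))
  have hmin := hmonic.eq_minpoly_of_irreducible hF hroot
  have hcop : IsCoprime (aeval α (derivative (minpoly ℤ α))) 2 := by
    have hroot' : α ^ 9 + a * α + b = 0 := by simpa using hroot
    convert isCoprime_nine_mul_pow_eight_add_two hroot' hb
    rw [← hmin]
    simp [map_ofNat]
  have hodd := RingOfIntegers.not_dvd_norm_of_isCoprime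
    (RingOfIntegers.aeval_derivative_minpoly_ne_zero α) Nat.prime_two (by exact_mod_cast hcop)
  have hdvd := RingOfIntegers.subringIndex_dvd_natAbs_pow
    (RingOfIntegers.norm_aeval_derivative_minpoly_mul_mem_adjoin hgen)
  intro h2
  exact hodd (Int.natCast_dvd.mpr (Nat.prime_two.dvd_of_dvd_pow (h2.trans hdvd)))
end

section
/- Let K = ℚ(α) where α is a root of the monic irreducible trinomial F(x) = x^9 + a·x + b ∈ ℤ[x]. If 3 does not divide a, then 3 does not divide the index (ℤ_K : ℤ[α]). -/
/-!
A prime `p` dividing `(ℤ_K : ℤ[θ])` divides the discriminant `d` of `1, θ, …, θ^(n-1)`,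
since `d • ℤ_K ⊆ ℤ[θ]`. For a root `θ` of `X^n + a X + b` one has `Tr θ^k = 0` for
`0 < k < n - 1`, `Tr 1 = n` and `Tr θ^(n-1) = -(n-1) a`. So if `p ∣ n`, the trace matrix
`(Tr θ^(i+j))` vanishes mod `p` above its antidiagonal, whose entries are `≡ a`; hence
`d ≡ ±a^n` is prime to `p` as soon as `p ∤ a`.
-/

open Polynomial NumberField

namespace PowerBasis

variable {R S : Type*} [CommRing R] [CommRing S] [Algebra R S] {pb : PowerBasis R S} {a b : R}

lemma basis_repr_gen_pow_of_lt {m : ℕ} (hm : m < pb.dim) (i : Fin pb.dim) :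
    pb.basis.repr (pb.gen ^ m) i = if (i : ℕ) = m then 1 else 0 := by
  rw [← pb.basis_eq_pow ⟨m, hm⟩, pb.basis.repr_self, Finsupp.single_apply]
  simp [Fin.ext_iff, eq_comm]

lemma trace_gen_pow_eq_sum (k : ℕ) :
    Algebra.trace R S (pb.gen ^ k) = ∑ i : Fin pb.dim, pb.basis.repr (pb.gen ^ (k + i)) i := by
  classical
  rw [Algebra.trace_eq_matrix_trace pb.basis, Matrix.trace]
  refine Finset.sum_congr rfl fun i _ => ?_
  rw [Matrix.diag_apply, Algebra.leftMulMatrix_eq_repr_mul, pb.basis_eq_pow, pow_add]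

lemma gen_pow_add_dim_of_trinomial (hroot : aeval pb.gen (X ^ pb.dim + C a * X + C b) = 0)
    (m : ℕ) : pb.gen ^ (m + pb.dim) = -a • pb.gen ^ (m + 1) - b • pb.gen ^ m := by
  simp only [map_add, map_pow, map_mul, aeval_X, aeval_C] at hroot
  rw [Algebra.smul_def, Algebra.smul_def, map_neg]
  linear_combination pb.gen ^ m * hroot

lemma basis_repr_gen_pow_add_of_trinomial
    (hroot : aeval pb.gen (X ^ pb.dim + C a * X + C b) = 0) {k : ℕ} (hk : 0 < k)
    (hkd : k < pb.dim) (i : Fin pb.dim) :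
    pb.basis.repr (pb.gen ^ (k + i)) i = if k + 1 = pb.dim ∧ 0 < (i : ℕ) then -a else 0 := by
  have hi := i.isLt
  rcases lt_or_ge (k + i) pb.dim with h | h
  · rw [basis_repr_gen_pow_of_lt h, if_neg (by omega), if_neg (by omega)]
  · obtain ⟨m, hm⟩ : ∃ m, k + i = m + pb.dim := ⟨k + i - pb.dim, by omega⟩
    rw [hm, gen_pow_add_dim_of_trinomial hroot, map_sub, map_smul, map_smul, Finsupp.sub_apply,
      Finsupp.smul_apply, Finsupp.smul_apply, basis_repr_gen_pow_of_lt (by omega),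
      basis_repr_gen_pow_of_lt (by omega), if_neg (show (i : ℕ) ≠ m by omega)]
    by_cases hk1 : k + 1 = pb.dim
    · rw [if_pos (by omega), if_pos (by omega)]
      simp
    · rw [if_neg (by omega), if_neg (by omega)]
      simp

lemma trace_gen_pow_eq_zero_of_trinomial
    (hroot : aeval pb.gen (X ^ pb.dim + C a * X + C b) = 0) {k : ℕ} (hk : 0 < k)
    (hkd : k + 1 < pb.dim) : Algebra.trace R S (pb.gen ^ k) = 0 := by
  rw [trace_gen_pow_eq_sum]
  exact Finset.sum_eq_zero fun i _ => by
    rw [basis_repr_gen_pow_add_of_trinomial hroot hk (by omega), if_neg (by omega)]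

lemma trace_gen_pow_eq_of_trinomial
    (hroot : aeval pb.gen (X ^ pb.dim + C a * X + C b) = 0) {k : ℕ} (hk : 0 < k)
    (hkd : k + 1 = pb.dim) : Algebra.trace R S (pb.gen ^ k) = -k * a := by
  simp only [trace_gen_pow_eq_sum, basis_repr_gen_pow_add_of_trinomial hroot hk (by omega), hkd,
    true_and]
  rw [Fin.sum_univ_eq_sum_range (fun i => if 0 < i then -a else 0), ← hkd,
    Finset.sum_range_succ']
  simp

end PowerBasis

namespace Matrix

variable {n : ℕ}

lemma det_eq_sign_mul_prod_antidiagonal {R : Type*} [CommRing R] (M : Matrix (Fin n) (Fin n) R)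
    (hM : ∀ i j : Fin n, (i : ℕ) + j + 1 < n → M i j = 0) :
    M.det = Equiv.Perm.sign (Fin.revPerm : Equiv.Perm (Fin n)) * ∏ i, M i.rev i := by
  have hupper : (M.submatrix Fin.revPerm id).IsUpperTriangular := by
    intro i j (hji : j < i)
    exact hM _ _ (by simp only [Fin.revPerm_apply, Fin.val_rev, id, Fin.lt_def] at hji ⊢; omega)
  have hprod : (M.submatrix Fin.revPerm id).det = ∏ i, M i.rev i :=
    det_of_isUpperTriangular hupper
  rw [← hprod, det_permute, ← mul_assoc]
  norm_cast
  rw [Int.units_mul_self]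
  simp

lemma not_dvd_det_of_antidiagonal {p : ℕ} [Fact p.Prime] (M : Matrix (Fin n) (Fin n) ℤ)
    (hM : ∀ i j : Fin n, (i : ℕ) + j + 1 < n → (p : ℤ) ∣ M i j)
    (hdiag : ∀ i : Fin n, ¬ (p : ℤ) ∣ M i.rev i) :
    ¬ (p : ℤ) ∣ M.det := by
  simp only [← ZMod.intCast_zmod_eq_zero_iff_dvd] at hM hdiag ⊢
  rw [Int.cast_det, det_eq_sign_mul_prod_antidiagonal (M.map (Int.cast : ℤ → ZMod p))
    fun i j h => hM i j h]
  rcases Int.units_eq_one_or (Equiv.Perm.sign (Fin.revPerm : Equiv.Perm (Fin n))) with h | h <;>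
    simp [h, Finset.prod_eq_zero_iff, hdiag]

end Matrix

lemma monic_X_pow_add_C_mul_X_add_C {n : ℕ} (hn : 2 ≤ n) (a b : ℤ) :
    (X ^ n + C a * X + C b : ℤ[X]).Monic := by
  rw [add_assoc]
  exact monic_X_pow_add (degree_linear_le.trans_lt (by exact_mod_cast hn))

lemma natDegree_X_pow_add_C_mul_X_add_C {n : ℕ} (hn : 2 ≤ n) (a b : ℤ) :
    (X ^ n + C a * X + C b : ℤ[X]).natDegree = n := by
  rw [add_assoc, natDegree_add_eq_left_of_degree_lt, natDegree_X_pow]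
  exact degree_linear_le.trans_lt (by rw [degree_X_pow]; exact_mod_cast hn)

lemma minpoly_eq_map_of_irreducible_of_monic {L : Type*} [Field L] [Algebra ℚ L] {x : L}
    {F : ℤ[X]} (hF : Irreducible F) (hmonic : F.Monic) (hx : aeval x F = 0) :
    minpoly ℚ x = F.map (algebraMap ℤ ℚ) :=
  (minpoly.eq_of_irreducible_of_monic
    ((IsPrimitive.Int.irreducible_iff_irreducible_map_cast hmonic.isPrimitive).mp hF)
    (by rwa [← algebraMap_int_eq, aeval_map_algebraMap]) (hmonic.map _)).symm

section NumberField

variable {K : Type*} [Field K] [NumberField K]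

lemma subringIndex_dvd_of_smul_mem {θ : 𝓞 K} {d : ℤ}
    (h : ∀ z : 𝓞 K, d • z ∈ Algebra.adjoin ℤ {θ}) :
    subringIndex θ ∣ (d ^ Module.finrank ℚ K).natAbs := by
  have hle : (Ideal.span {(d : 𝓞 K)}).toAddSubgroup ≤
      (Algebra.adjoin ℤ {θ}).toSubring.toAddSubgroup := by
    intro x hx
    obtain ⟨z, rfl⟩ := Ideal.mem_span_singleton'.mp hx
    simpa [zsmul_eq_mul, mul_comm] using h z
  have hindex := AddSubgroup.index_dvd_of_le hle
  rwa [← Ideal.absNorm_eq_index, Ideal.absNorm_span_singleton,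
    ← eq_intCast (algebraMap ℤ (𝓞 K)), Algebra.norm_algebraMap, RingOfIntegers.rank] at hindex

section

variable {θ : 𝓞 K} (pb : PowerBasis ℚ K)

lemma intCast_trace_pow (hθ : pb.gen = θ) (k : ℕ) :
    (Algebra.trace ℤ (𝓞 K) (θ ^ k) : ℚ) = Algebra.trace ℚ K (pb.gen ^ k) := by
  rw [Algebra.coe_trace_int, hθ]
  push_cast
  rfl

lemma intCast_discr_pow (hθ : pb.gen = θ) :
    (Algebra.discr ℤ (fun i : Fin pb.dim => θ ^ (i : ℕ)) : ℚ) = Algebra.discr ℚ pb.basis := by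
  rw [Algebra.discr_def, Algebra.discr_def, Int.cast_det]
  congr 1
  ext i j
  simp [Algebra.traceMatrix_apply, Algebra.traceForm_apply, ← pow_add,
    intCast_trace_pow pb hθ]

lemma discr_smul_mem_adjoin (hθ : pb.gen = θ) (z : 𝓞 K) :
    Algebra.discr ℤ (fun i : Fin pb.dim => θ ^ (i : ℕ)) • z ∈ Algebra.adjoin ℤ {θ} := by
  have hmem := Algebra.discr_mul_isIntegral_mem_adjoin ℚ (R := ℤ) (B := pb)
    (by rw [hθ]; exact RingOfIntegers.isIntegral_coe θ) (RingOfIntegers.isIntegral_coe z)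
  rw [← intCast_discr_pow pb hθ, hθ, Algebra.adjoin_singleton_eq_range_aeval] at hmem
  obtain ⟨q, hq⟩ := hmem
  refine Algebra.adjoin_singleton_eq_range_aeval ℤ θ ▸ ⟨q, RingOfIntegers.coe_injective ?_⟩
  simp only [AlgHom.toRingHom_eq_coe, RingHom.coe_coe, Int.cast_smul_eq_zsmul] at hq ⊢
  rw [map_zsmul, ← aeval_algebraMap_apply]
  exact hq

lemma subringIndex_dvd_discr_pow (hθ : pb.gen = θ) :
    subringIndex θ ∣
      (Algebra.discr ℤ (fun i : Fin pb.dim => θ ^ (i : ℕ)) ^ Module.finrank ℚ K).natAbs :=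
  subringIndex_dvd_of_smul_mem (discr_smul_mem_adjoin pb hθ)

variable {pb} {a b : ℤ} {p : ℕ}

lemma dvd_trace_pow_of_trinomial (hθ : pb.gen = θ)
    (hroot : aeval pb.gen (X ^ pb.dim + C (a : ℚ) * X + C (b : ℚ)) = 0) (hpn : p ∣ pb.dim)
    {k : ℕ} (hk : k + 1 < pb.dim) : (p : ℤ) ∣ Algebra.trace ℤ (𝓞 K) (θ ^ k) := by
  rcases Nat.eq_zero_or_pos k with rfl | hk0
  · rw [pow_zero, ← map_one (algebraMap ℤ (𝓞 K)), Algebra.trace_algebraMap,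
      RingOfIntegers.rank, pb.finrank, nsmul_one]
    exact Int.natCast_dvd_natCast.mpr hpn
  · have htrace : Algebra.trace ℤ (𝓞 K) (θ ^ k) = 0 := by
      exact_mod_cast (intCast_trace_pow pb hθ k).trans
        (PowerBasis.trace_gen_pow_eq_zero_of_trinomial hroot hk0 hk)
    simp [htrace]

lemma trace_pow_dim_sub_one_of_trinomial (hθ : pb.gen = θ)
    (hroot : aeval pb.gen (X ^ pb.dim + C (a : ℚ) * X + C (b : ℚ)) = 0) (h2 : 2 ≤ pb.dim) :
    Algebra.trace ℤ (𝓞 K) (θ ^ (pb.dim - 1)) = a - pb.dim * a := by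
  have htrace := (intCast_trace_pow pb hθ _).trans
    (PowerBasis.trace_gen_pow_eq_of_trinomial hroot (k := pb.dim - 1) (by omega) (by omega))
  have htrace' :
      (Algebra.trace ℤ (𝓞 K) (θ ^ (pb.dim - 1)) : ℚ) = ((a - pb.dim * a : ℤ) : ℚ) := by
    rw [htrace, Nat.cast_sub (by omega : 1 ≤ pb.dim)]
    push_cast
    ring
  exact_mod_cast htrace'

lemma not_dvd_discr_of_trinomial [Fact p.Prime] (hθ : pb.gen = θ)
    (hroot : aeval pb.gen (X ^ pb.dim + C (a : ℚ) * X + C (b : ℚ)) = 0) (h2 : 2 ≤ pb.dim)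
    (hpn : p ∣ pb.dim) (hpa : ¬ (p : ℤ) ∣ a) :
    ¬ (p : ℤ) ∣ Algebra.discr ℤ (fun i : Fin pb.dim => θ ^ (i : ℕ)) := by
  rw [Algebra.discr_def]
  refine Matrix.not_dvd_det_of_antidiagonal _ (fun i j hij => ?_) (fun i => ?_)
  · simpa [Algebra.traceMatrix_apply, Algebra.traceForm_apply, ← pow_add]
      using dvd_trace_pow_of_trinomial hθ hroot hpn (k := i + j) (by omega)
  · have hanti : ¬ (p : ℤ) ∣ Algebra.trace ℤ (𝓞 K) (θ ^ (pb.dim - 1)) := by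
      rwa [trace_pow_dim_sub_one_of_trinomial hθ hroot h2,
        dvd_sub_left ((Int.natCast_dvd_natCast.mpr hpn).mul_right a)]
    simpa [Algebra.traceMatrix_apply, Algebra.traceForm_apply, ← pow_add, Fin.val_rev,
      show pb.dim - (i + 1) + i = pb.dim - 1 by omega] using hanti

end

theorem not_dvd_subringIndex_of_trinomial {n p : ℕ} [hp : Fact p.Prime] {a b : ℤ} (hn : 2 ≤ n)
    (hpn : p ∣ n) (hpa : ¬ (p : ℤ) ∣ a) (hF : Irreducible (X ^ n + C a * X + C b)) {θ : 𝓞 K}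
    (hroot : aeval θ (X ^ n + C a * X + C b) = 0) (hgen : Algebra.adjoin ℚ {(θ : K)} = ⊤) :
    ¬ p ∣ subringIndex θ := by
  let pb := PowerBasis.ofAdjoinEqTop (IsIntegral.of_finite ℚ (θ : K)) hgen
  have hrootK : aeval (θ : K) (X ^ n + C a * X + C b) = 0 := by
    rw [aeval_algebraMap_apply, hroot, map_zero]
  have hdim : pb.dim = n := by
    rw [PowerBasis.ofAdjoinEqTop_dim, minpoly_eq_map_of_irreducible_of_monic hF
      (monic_X_pow_add_C_mul_X_add_C hn a b) hrootK,
      (monic_X_pow_add_C_mul_X_add_C hn a b).natDegree_map, natDegree_X_pow_add_C_mul_X_add_C hn]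
  have hrootpb : aeval pb.gen (X ^ pb.dim + C (a : ℚ) * X + C (b : ℚ)) = 0 := by
    rw [hdim]
    simpa [pb] using hrootK
  intro hindex
  have hdiscr := Int.natCast_dvd.mpr (hindex.trans (subringIndex_dvd_discr_pow pb rfl))
  exact not_dvd_discr_of_trinomial rfl hrootpb (hdim ▸ hn) (hdim ▸ hpn) hpa
    (Int.Prime.dvd_pow' hp.out hdiscr)

end NumberField

/-- If `3` does not divide `a`, then `3` does not divide the index `(ℤ_K : ℤ[α])`. -/
theorem not_three_dvd_subringIndex_of_not_dvd
    (a b : ℤ) (hF : Irreducible (X ^ 9 + C a * X + C b))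
    (K : Type*) [Field K] [NumberField K] (α : 𝓞 K)
    (hroot : aeval α (X ^ 9 + C a * X + C b) = 0)
    (hgen : Algebra.adjoin ℚ ({(α : K)} : Set K) = ⊤)
    (ha : ¬ (3 : ℤ) ∣ a) :
    ¬ 3 ∣ subringIndex α :=
  have : Fact (Nat.Prime 3) := ⟨Nat.prime_three⟩
  not_dvd_subringIndex_of_trinomial (p := 3) (by norm_num) (by norm_num) ha hF hroot hgen
end
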